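/- Each component of the VI-SLAM measurement function is equivariant: for every X = (A, β, B, (Q_i)) ∈ G, every ξ ∈ 𝒯, and every index k, h^k(φ(X, ξ)) = R_{Q_k}ᵀ h^k(ξ). -/

import Mathlib

noncomputable section
open Matrix

abbrev Mat3 := Matrix (Fin 3) (Fin 3) ℝ
abbrev Vec3 := EuclideanSpace ℝ (Fin 3)
abbrev Vec6 := EuclideanSpace ℝ (Fin 6)

/-- Membership in `SO(3)`. -/
def SO3 (R : Mat3) : Prop := Rᵀ * R = 1 ∧ R.det = 1

/-- The standard gravity direction `e₃ = (0,0,1)`. -/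
def e3 : Vec3 := WithLp.toLp 2 ![0, 0, 1]

/-- Matrix-vector multiplication on `ℝ³`. -/
def mulv (M : Mat3) (v : Vec3) : Vec3 := WithLp.toLp 2 (M.mulVec v)

/-- `SE(3)` elements as (rotation, translation) pairs `(R_P, x_P)`. -/
abbrev SE3 := Mat3 × Vec3
def SE3.mul (P Q : SE3) : SE3 := (P.1 * Q.1, P.2 + mulv P.1 Q.2)
def SE3.one : SE3 := (1, 0)
def SE3.inv (P : SE3) : SE3 := (P.1ᵀ, -(mulv P.1ᵀ P.2))
/-- The action of `SE(3)` on `ℝ³`: `P p = R_P p + x_P`. -/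
def SE3.act (P : SE3) (p : Vec3) : Vec3 := mulv P.1 p + P.2

/-- Membership in `SE_{e₃}(3) := {(R,x) ∈ SE(3) | R e₃ = e₃}`. -/
def SEe3 (S : SE3) : Prop := SO3 S.1 ∧ mulv S.1 e3 = e3

/-- `SOT(3)` elements as pairs `(R_Q, c_Q)`. -/
abbrev SOT3 := Mat3 × ℝ
def SOT3.mem (Q : SOT3) : Prop := SO3 Q.1 ∧ 0 < Q.2
def SOT3.mul (Q₁ Q₂ : SOT3) : SOT3 := (Q₁.1 * Q₂.1, Q₁.2 * Q₂.2)
def SOT3.one : SOT3 := (1, 1)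
def SOT3.inv (Q : SOT3) : SOT3 := (Q.1ᵀ, Q.2⁻¹)
/-- The action of `SOT(3)` on `ℝ³`: `Q p = c_Q R_Q p`. -/
def SOT3.act (Q : SOT3) (p : Vec3) : Vec3 := Q.2 • mulv Q.1 p

/-- `SE₂(3)` elements as triples `(R_A, x_A, v_A)`. -/
abbrev SE23 := Mat3 × Vec3 × Vec3
def SE23.mem (A : SE23) : Prop := SO3 A.1
def SE23.mul (A₁ A₂ : SE23) : SE23 :=
  (A₁.1 * A₂.1, A₁.2.1 + mulv A₁.1 A₂.2.1, A₁.2.2 + mulv A₁.1 A₂.2.2)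
def SE23.one : SE23 := (1, 0, 0)
/-- The pose component `P_A = (R_A, x_A)` of `A = (P_A, v_A) ∈ SE₂(3)`. -/
def SE23.P (A : SE23) : SE3 := (A.1, A.2.1)

/-- A point of the ambient VI-SLAM state space with `n` landmarks. -/
structure VIState (n : ℕ) where
  P : SE3            -- pose of the IMU `(R_B, x_B)`
  v : Vec3           -- linear velocity `v_B`
  b : Vec6           -- IMU bias `b_B`
  T : SE3            -- camera extrinsics
  p : Fin n → Vec3   -- landmark positions

/-- Membership in the VI-SLAM total space `𝒯`. -/
def VIState.mem {n : ℕ} (ξ : VIState n) : Prop :=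
  SO3 ξ.P.1 ∧ SO3 ξ.T.1 ∧ ∀ i, SE3.act (SE3.inv (SE3.mul ξ.P ξ.T)) (ξ.p i) ≠ 0

/-- An element `X = (A, β, B, (Q_i))` of the group `G = SE₂(3) × ℝ⁶ × SE(3) × SOT(3)ⁿ`. -/
structure GElem (n : ℕ) where
  A : SE23
  β : Vec6
  B : SE3
  Q : Fin n → SOT3

def GElem.mem {n : ℕ} (X : GElem n) : Prop :=
  SE23.mem X.A ∧ SO3 X.B.1 ∧ ∀ i, SOT3.mem (X.Q i)

/-- Componentwise product on `G`. -/
def GElem.mul {n : ℕ} (X₁ X₂ : GElem n) : GElem n :=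
  ⟨SE23.mul X₁.A X₂.A, X₁.β + X₂.β, SE3.mul X₁.B X₂.B, fun i => SOT3.mul (X₁.Q i) (X₂.Q i)⟩

def GElem.one (n : ℕ) : GElem n := ⟨SE23.one, 0, SE3.one, fun _ => SOT3.one⟩

/-- The group action
`φ(X, ξ) := (φ^B(A, ξ_B), b_B + β, P_A⁻¹ T B, (P_B T B (Q_i⁻¹ ((P_B T)⁻¹ p_i))))`. -/
def phi {n : ℕ} (X : GElem n) (ξ : VIState n) : VIState n :=
  ⟨SE3.mul ξ.P (SE23.P X.A), ξ.v + mulv ξ.P.1 X.A.2.2, ξ.b + X.β,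
   SE3.mul (SE3.mul (SE3.inv (SE23.P X.A)) ξ.T) X.B,
   fun i => SE3.act (SE3.mul (SE3.mul ξ.P ξ.T) X.B)
     (SOT3.act (SOT3.inv (X.Q i)) (SE3.act (SE3.inv (SE3.mul ξ.P ξ.T)) (ξ.p i)))⟩

/-- The `k`-th component of the measurement function: `h^k(ξ) = q_k/|q_k|`
with `q_k = (P_B T)⁻¹ p_k`. -/
def hComp {n : ℕ} (ξ : VIState n) (k : Fin n) : Vec3 :=
  ‖SE3.act (SE3.inv (SE3.mul ξ.P ξ.T)) (ξ.p k)‖⁻¹ •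
    SE3.act (SE3.inv (SE3.mul ξ.P ξ.T)) (ξ.p k)

/-!
In `φ(X, ξ)` the factors `P_A` and `P_A⁻¹` cancel in the camera pose, which becomes `P_B T B`.
Hence the landmark seen from the camera transforms as `q_k ↦ Q_k⁻¹ q_k = c_k⁻¹ R_{Q_k}ᵀ q_k`,
and normalizing removes the positive scale `c_k⁻¹` and commutes with the isometry `R_{Q_k}ᵀ`.
-/

local notation "O(3)" => Matrix.orthogonalGroup (Fin 3) ℝ

lemma SO3.mem_orthogonalGroup {R : Mat3} (hR : SO3 R) : R ∈ O(3) :=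
  (Matrix.mem_orthogonalGroup_iff' _ _).2 hR.1

lemma mulv_eq_toEuclideanCLM (M : Mat3) : mulv M = Matrix.toEuclideanCLM (𝕜 := ℝ) M := rfl

lemma mulv_add (M : Mat3) (x y : Vec3) : mulv M (x + y) = mulv M x + mulv M y := by
  simp only [mulv_eq_toEuclideanCLM, map_add]

lemma mulv_neg (M : Mat3) (x : Vec3) : mulv M (-x) = -mulv M x := by
  simp only [mulv_eq_toEuclideanCLM, map_neg]

lemma mulv_smul (M : Mat3) (c : ℝ) (x : Vec3) : mulv M (c • x) = c • mulv M x := by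
  simp only [mulv_eq_toEuclideanCLM, map_smul]

lemma mulv_mul (M N : Mat3) (x : Vec3) : mulv (M * N) x = mulv M (mulv N x) := by
  simp only [mulv, Matrix.mulVec_mulVec]

lemma mulv_one (x : Vec3) : mulv 1 x = x := by
  simp only [mulv, Matrix.one_mulVec]

lemma norm_mulv_of_mem_orthogonalGroup {R : Mat3} (hR : R ∈ O(3)) (x : Vec3) :
    ‖mulv R x‖ = ‖x‖ :=
  ContinuousLinearMap.norm_map_of_mem_unitary
    (Unitary.map_mem (Matrix.toEuclideanCLM (𝕜 := ℝ) (n := Fin 3)) hR) x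

lemma normalize_mulv_of_mem_orthogonalGroup {R : Mat3} (hR : R ∈ O(3)) (x : Vec3) :
    NormedSpace.normalize (mulv R x) = mulv R (NormedSpace.normalize x) := by
  simp only [NormedSpace.normalize, norm_mulv_of_mem_orthogonalGroup hR, mulv_smul]

namespace SE3

lemma mul_assoc (P Q S : SE3) : mul (mul P Q) S = mul P (mul Q S) := by
  simp only [mul, _root_.mul_assoc, mulv_add, mulv_mul, add_assoc]

lemma one_mul (P : SE3) : mul one P = P := by
  simp only [mul, one, _root_.one_mul, mulv_one, zero_add]

lemma mul_inv_cancel {P : SE3} (hP : P.1 ∈ O(3)) : mul P (inv P) = one := by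
  have hP' : P.1 * P.1ᵀ = 1 := (Matrix.mem_orthogonalGroup_iff _ _).1 hP
  simp only [mul, inv, one, hP', mulv_neg, ← mulv_mul, mulv_one, add_neg_cancel]

lemma inv_act_act {P : SE3} (hP : P.1 ∈ O(3)) (p : Vec3) : act (inv P) (act P p) = p := by
  have hP' : P.1ᵀ * P.1 = 1 := (Matrix.mem_orthogonalGroup_iff' _ _).1 hP
  simp only [act, inv, mulv_add, ← mulv_mul, hP', mulv_one, add_neg_cancel_right]

end SE3

lemma SOT3.normalize_act_inv {Q : SOT3} (hQ : Q.mem) (x : Vec3) :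
    NormedSpace.normalize (act (inv Q) x) = mulv Q.1ᵀ (NormedSpace.normalize x) := by
  rw [act, inv, NormedSpace.normalize_smul_of_pos (inv_pos.2 hQ.2),
    normalize_mulv_of_mem_orthogonalGroup
      (Matrix.transpose_mem_unitaryGroup_iff.2 hQ.1.mem_orthogonalGroup)]

namespace VIState

variable {n : ℕ}

def cameraPose (ξ : VIState n) : SE3 := SE3.mul ξ.P ξ.T

def landmarkInCamera (ξ : VIState n) (k : Fin n) : Vec3 :=
  SE3.act (SE3.inv ξ.cameraPose) (ξ.p k)

lemma hComp_eq_normalize (ξ : VIState n) (k : Fin n) :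
    hComp ξ k = NormedSpace.normalize (ξ.landmarkInCamera k) := rfl

lemma cameraPose_phi {X : GElem n} (hA : X.A.1 ∈ O(3)) (ξ : VIState n) :
    (phi X ξ).cameraPose = SE3.mul ξ.cameraPose X.B := by
  change SE3.mul (SE3.mul ξ.P (SE23.P X.A)) (SE3.mul (SE3.mul (SE3.inv (SE23.P X.A)) ξ.T) X.B) = _
  rw [SE3.mul_assoc, ← SE3.mul_assoc (SE23.P X.A), ← SE3.mul_assoc (SE23.P X.A),
    SE3.mul_inv_cancel hA, SE3.one_mul, cameraPose, SE3.mul_assoc]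

lemma landmarkInCamera_phi {X : GElem n} {ξ : VIState n} (hA : X.A.1 ∈ O(3))
    (hC : (SE3.mul ξ.cameraPose X.B).1 ∈ O(3)) (k : Fin n) :
    (phi X ξ).landmarkInCamera k = SOT3.act (SOT3.inv (X.Q k)) (ξ.landmarkInCamera k) := by
  rw [landmarkInCamera, cameraPose_phi hA]
  exact SE3.inv_act_act hC _

end VIState

theorem h_component_equivariant_general (n : ℕ) (X : GElem n) (ξ : VIState n)
    (hX : X.mem) (hξ : ξ.mem) (k : Fin n) :
    hComp (phi X ξ) k = mulv (X.Q k).1ᵀ (hComp ξ k) := by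
  obtain ⟨hA, hB, hQ⟩ := hX
  obtain ⟨hP, hT, -⟩ := hξ
  have hC : (SE3.mul ξ.cameraPose X.B).1 ∈ O(3) :=
    mul_mem (mul_mem hP.mem_orthogonalGroup hT.mem_orthogonalGroup) hB.mem_orthogonalGroup
  rw [VIState.hComp_eq_normalize, VIState.hComp_eq_normalize,
    VIState.landmarkInCamera_phi hA.mem_orthogonalGroup hC, SOT3.normalize_act_inv (hQ k)]

/-- Each component of the VI-SLAM measurement function is equivariant:
`h^k(φ(X, ξ)) = R_{Q_k}ᵀ h^k(ξ)` for every `X = (A, β, B, (Q_i)) ∈ G`, `ξ ∈ 𝒯` and `k`. -/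
theorem h_component_equivariant (n : ℕ) (hn : 1 ≤ n) (X : GElem n) (ξ : VIState n)
    (hX : X.mem) (hξ : ξ.mem) (k : Fin n) :
    hComp (phi X ξ) k = mulv (X.Q k).1ᵀ (hComp ξ k) :=
  h_component_equivariant_general n X ξ hX hξ k
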